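/- Let α > 0, β > 0, p ∈ [0,1] and 0 < r < β. Then the r-th inverted moment of the RTUOMG distribution satisfies ∫₀¹ x^{−r} f(x) dx = 2α(1−p)·∫₀¹ y^{−r/β} (1−y)^{α−1} (1+y)^{−(α+1)} dy + 4pα²·∑_{k=1}^∞ (1/(2k−1))·∫₀¹ y^{2k−1−r/β} (1−y)^{α−1} (1+y)^{−(α+1)} dy, where the series on the right converges. -/

import Mathlib

/-!
Substituting `y = x^β` turns the inverted moment into
`2α ∫₀¹ y^{-r/β} (1-y)^{α-1} (1+y)^{-(α+1)} (1 - p + pα log((1+y)/(1-y))) dy`,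
since `-log ω(x) = α log((1+y)/(1-y))`. The kernel is integrable because `-r/β > -1` and
`α - 1 > -1`; multiplied by the logarithm it stays integrable, as `log((1+y)/(1-y))` is
dominated by `((1+y)/(1-y))^ε / ε` for small `ε`. Expanding
`log((1+y)/(1-y)) = 2 ∑ y^{2k+1}/(2k+1)` gives a series of nonnegative functions, which can be
integrated term by term.
-/

/-- The omega function `ω(x) = ((1 + x^β)/(1 - x^β))^{-α}` on `(0,1)`. -/
noncomputable def omegaFn (α β x : ℝ) : ℝ := ((1 + x ^ β) / (1 - x ^ β)) ^ (-α)

/-- The RTUOMG probability density function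
`f(x) = (2αβ x^{β-1}/(1 - x^{2β})) ω(x) (1 - p - p log ω(x))`. -/
noncomputable def rtuomgPDF (α β p x : ℝ) : ℝ :=
  2 * α * β * x ^ (β - 1) / (1 - x ^ (2 * β)) * omegaFn α β x *
    (1 - p - p * Real.log (omegaFn α β x))

open MeasureTheory Set Real

lemma log_one_add_sub_log_one_sub_le {y ε : ℝ} (hy : y ∈ Ioo (-1) 1) (hε : 0 < ε) :
    log (1 + y) - log (1 - y) ≤ (1 + y) ^ ε * (1 - y) ^ (-ε) / ε := by
  have h1p : 0 < 1 + y := by linarith [hy.1]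
  have h1m : 0 < 1 - y := by linarith [hy.2]
  rw [← log_div h1p.ne' h1m.ne', rpow_neg h1m.le, ← div_eq_mul_inv, ← div_rpow h1p.le h1m.le]
  exact log_le_rpow_div (by positivity) hε

lemma log_one_add_sub_log_one_sub_nonneg {y : ℝ} (hy : y ∈ Ioo 0 1) :
    0 ≤ log (1 + y) - log (1 - y) :=
  sub_nonneg.2 (log_le_log (by linarith [hy.2]) (by linarith [hy.1]))

lemma hasSum_rpow_mul_log {y : ℝ} (hy : y ∈ Ioo 0 1) (s : ℝ) :
    HasSum (fun k : ℕ => 2 * (1 / (2 * k + 1)) * y ^ (2 * k + 1 + s))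
      (y ^ s * (log (1 + y) - log (1 - y))) := by
  have h := (hasSum_log_sub_log_of_abs_lt_one (abs_lt.2 ⟨by linarith [hy.1], hy.2⟩)).mul_left
    (y ^ s)
  refine h.congr_fun fun k => ?_
  rw [rpow_add hy.1, ← rpow_natCast]
  push_cast
  ring

section Kernel

variable {s t : ℝ}

lemma integrableOn_rpow_mul_one_sub_rpow_mul_one_add_rpow (hs : -1 < s) (ht : -1 < t) (c : ℝ) :
    IntegrableOn (fun y : ℝ => y ^ s * (1 - y) ^ t * (1 + y) ^ c) (Ioo 0 1) := by
  have hleft : IntegrableOn (fun y : ℝ => y ^ s * (1 - y) ^ t * (1 + y) ^ c) (Icc 0 (1 / 2)) := by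
    refine ((IntegrableOn.mul_continuousOn ?_ ?_ isCompact_Icc).mul_continuousOn ?_ isCompact_Icc)
    · rw [integrableOn_Icc_iff_integrableOn_Ioc]
      exact (intervalIntegral.intervalIntegrable_rpow' hs).1
    · exact ContinuousOn.rpow_const (by fun_prop) fun y hy => Or.inl (by linarith [hy.2])
    · exact ContinuousOn.rpow_const (by fun_prop) fun y hy => Or.inl (by linarith [hy.1])
  have hright : IntegrableOn (fun y : ℝ => y ^ s * (1 - y) ^ t * (1 + y) ^ c) (Icc (1 / 2) 1) := by
    refine ((IntegrableOn.continuousOn_mul ?_ ?_ isCompact_Icc).mul_continuousOn ?_ isCompact_Icc)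
    · exact ContinuousOn.rpow_const (by fun_prop) fun y hy => Or.inl (by linarith [hy.1])
    · rw [integrableOn_Icc_iff_integrableOn_Ioc]
      have h := (intervalIntegral.intervalIntegrable_rpow' ht).comp_sub_left 1 (a := 0) (b := 1 / 2)
      rw [sub_zero, show (1:ℝ) - 1 / 2 = 1 / 2 by norm_num] at h
      exact h.symm.1
    · exact ContinuousOn.rpow_const (by fun_prop) fun y hy => Or.inl (by linarith [hy.1])
  have hunion := hleft.union hright
  rw [Icc_union_Icc_eq_Icc (by norm_num) (by norm_num)] at hunion
  exact hunion.mono_set Ioo_subset_Icc_self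

lemma integrableOn_rpow_mul_one_sub_rpow_mul_one_add_rpow_mul_log (hs : -1 < s) (ht : -1 < t)
    (c : ℝ) :
    IntegrableOn (fun y : ℝ => y ^ s * (1 - y) ^ t * (1 + y) ^ c * (log (1 + y) - log (1 - y)))
      (Ioo 0 1) := by
  obtain ⟨ε, hε, htε⟩ : ∃ ε : ℝ, 0 < ε ∧ -1 < t - ε := ⟨(t + 1) / 2, by linarith, by linarith⟩
  refine Integrable.mono'
    ((integrableOn_rpow_mul_one_sub_rpow_mul_one_add_rpow hs htε
      (c + ε)).div_const ε) (by fun_prop) ?_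
  refine (ae_restrict_iff' measurableSet_Ioo).2 (Filter.Eventually.of_forall fun y hy => ?_)
  have h1p : 0 < 1 + y := by linarith [hy.1]
  have h1m : 0 < 1 - y := by linarith [hy.2]
  have hK : 0 ≤ y ^ s * (1 - y) ^ t * (1 + y) ^ c := by have hy0 := hy.1; positivity
  rw [norm_of_nonneg (mul_nonneg hK (log_one_add_sub_log_one_sub_nonneg hy))]
  calc y ^ s * (1 - y) ^ t * (1 + y) ^ c * (log (1 + y) - log (1 - y))
      ≤ y ^ s * (1 - y) ^ t * (1 + y) ^ c * ((1 + y) ^ ε * (1 - y) ^ (-ε) / ε) :=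
        mul_le_mul_of_nonneg_left
          (log_one_add_sub_log_one_sub_le ⟨by linarith [hy.1], hy.2⟩ hε) hK
    _ = y ^ s * (1 - y) ^ (t - ε) * (1 + y) ^ (c + ε) / ε := by
        rw [rpow_sub h1m, rpow_add h1p, rpow_neg h1m.le]
        field_simp

lemma hasSum_setIntegral_rpow_mul_log (hs : -1 < s) (ht : -1 < t) (c : ℝ) :
    HasSum (fun k : ℕ => 2 * (1 / (2 * k + 1)) *
        ∫ y in Ioo (0:ℝ) 1, y ^ (2 * k + 1 + s) * (1 - y) ^ t * (1 + y) ^ c)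
      (∫ y in Ioo (0:ℝ) 1, y ^ s * (1 - y) ^ t * (1 + y) ^ c * (log (1 + y) - log (1 - y))) := by
  set F : ℕ → ℝ → ℝ := fun k y =>
    2 * (1 / (2 * k + 1)) * (y ^ (2 * k + 1 + s) * (1 - y) ^ t * (1 + y) ^ c)
  have hF : ∀ᵐ y ∂(volume.restrict (Ioo (0:ℝ) 1)),
      HasSum (fun k => F k y) (y ^ s * (1 - y) ^ t * (1 + y) ^ c * (log (1 + y) - log (1 - y))) := by
    refine (ae_restrict_iff' measurableSet_Ioo).2 (Filter.Eventually.of_forall fun y hy => ?_)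
    have h := (hasSum_rpow_mul_log hy s).mul_right ((1 - y) ^ t * (1 + y) ^ c)
    rw [mul_right_comm, ← mul_assoc] at h
    exact h.congr_fun fun k => by simp only [F]; ring
  simp_rw [← integral_const_mul]
  -- the terms are nonnegative, so the series is its own dominating series
  refine hasSum_integral_of_dominated_convergence F (fun k => by fun_prop) (fun k => ?_)
    (hF.mono fun y hy => hy.summable) ?_ hF
  · refine (ae_restrict_iff' measurableSet_Ioo).2 (Filter.Eventually.of_forall fun y hy => ?_)
    have hy0 := hy.1
    have h1m : 0 < 1 - y := by linarith [hy.2]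
    exact (norm_of_nonneg (by positivity)).le
  · refine (integrableOn_rpow_mul_one_sub_rpow_mul_one_add_rpow_mul_log hs ht c).congr ?_
    exact hF.mono fun y hy => hy.tsum_eq.symm

end Kernel

lemma image_rpow_Ioo_zero_one {β : ℝ} (hβ : 0 < β) :
    (fun x : ℝ => x ^ β) '' Ioo 0 1 = Ioo 0 1 := by
  ext y
  constructor
  · rintro ⟨x, hx, rfl⟩
    exact ⟨rpow_pos_of_pos hx.1 β, rpow_lt_one hx.1.le hx.2 hβ⟩
  · intro hy
    refine ⟨y ^ β⁻¹, ⟨rpow_pos_of_pos hy.1 _, rpow_lt_one hy.1.le hy.2 (inv_pos.2 hβ)⟩, ?_⟩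
    show (y ^ β⁻¹) ^ β = y
    rw [← rpow_mul hy.1.le, inv_mul_cancel₀ hβ.ne', rpow_one]

lemma setIntegral_Ioo_comp_rpow {E : Type*} [NormedAddCommGroup E] [NormedSpace ℝ E] {β : ℝ}
    (hβ : 0 < β) (g : ℝ → E) :
    ∫ x in Ioo (0:ℝ) 1, (β * x ^ (β - 1)) • g (x ^ β) = ∫ y in Ioo (0:ℝ) 1, g y := by
  conv_rhs => rw [← image_rpow_Ioo_zero_one hβ]
  rw [integral_image_eq_integral_abs_deriv_smul measurableSet_Ioo
    (fun x hx => (hasDerivAt_rpow_const (Or.inl hx.1.ne')).hasDerivWithinAt)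
    ((rpow_left_injOn hβ.ne').mono fun x hx => hx.1.le) g]
  refine setIntegral_congr_fun measurableSet_Ioo fun x hx => ?_
  rw [abs_of_pos (by have hx0 := hx.1; positivity)]

lemma log_omegaFn {α β x : ℝ} (hx : x ^ β ∈ Ioo 0 1) :
    log (omegaFn α β x) = -α * (log (1 + x ^ β) - log (1 - x ^ β)) := by
  rw [omegaFn, log_rpow (div_pos (by linarith [hx.1]) (by linarith [hx.2])),
    log_div (by linarith [hx.1]) (by linarith [hx.2])]

lemma omegaFn_eq {α β x : ℝ} (hx : x ^ β ∈ Ioo 0 1) :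
    omegaFn α β x = (1 - x ^ β) ^ α * (1 + x ^ β) ^ (-α) := by
  have h1m : 0 < 1 - x ^ β := by linarith [hx.2]
  rw [omegaFn, div_rpow (by linarith [hx.1]) h1m.le, rpow_neg h1m.le, div_eq_mul_inv, inv_inv,
    mul_comm]

lemma rtuomgPDF_eq {α β p x : ℝ} (hβ : 0 < β) (hx : x ∈ Ioo 0 1) :
    rtuomgPDF α β p x = β * x ^ (β - 1) * (2 * α * ((1 - x ^ β) ^ (α - 1) *
      (1 + x ^ β) ^ (-(α + 1))) * (1 - p + p * α * (log (1 + x ^ β) - log (1 - x ^ β)))) := by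
  have hy : x ^ β ∈ Ioo 0 1 := ⟨rpow_pos_of_pos hx.1 β, rpow_lt_one hx.1.le hx.2 hβ⟩
  have h1p : 0 < 1 + x ^ β := by linarith [hy.1]
  have h1m : 0 < 1 - x ^ β := by linarith [hy.2]
  have hx2 : x ^ (2 * β) = x ^ β * x ^ β := by rw [two_mul, rpow_add hx.1]
  rw [rtuomgPDF, log_omegaFn hy, omegaFn_eq hy, hx2, rpow_sub h1m, rpow_one,
    neg_add, rpow_add h1p, rpow_neg_one,
    show 1 - x ^ β * x ^ β = (1 - x ^ β) * (1 + x ^ β) by ring]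
  field_simp
  ring

lemma setIntegral_rpow_neg_mul_rtuomgPDF {α β p r : ℝ} (hβ : 0 < β) :
    ∫ x in Ioo (0:ℝ) 1, x ^ (-r) * rtuomgPDF α β p x =
      ∫ y in Ioo (0:ℝ) 1, 2 * α * (y ^ (-(r / β)) * (1 - y) ^ (α - 1) * (1 + y) ^ (-(α + 1))) *
        (1 - p + p * α * (log (1 + y) - log (1 - y))) := by
  conv_rhs => rw [← setIntegral_Ioo_comp_rpow hβ]
  refine setIntegral_congr_fun measurableSet_Ioo fun x hx => ?_
  rw [rtuomgPDF_eq hβ hx, smul_eq_mul, ← rpow_mul hx.1.le, mul_neg, mul_div_cancel₀ r hβ.ne']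
  ring

theorem rtuomg_inverted_moment_general (α β p r : ℝ) (hα : 0 < α) (hβ : 0 < β)
    (hrβ : r < β) :
    Summable (fun k : ℕ => (1 / (2 * ((k : ℝ) + 1) - 1)) *
      ∫ y in (0:ℝ)..1,
        y ^ (2 * ((k : ℝ) + 1) - 1 - r / β) * (1 - y) ^ (α - 1) *
          (1 + y) ^ (-(α + 1))) ∧
    (∫ x in (0:ℝ)..1, x ^ (-r) * rtuomgPDF α β p x) =
      2 * α * (1 - p) *
        (∫ y in (0:ℝ)..1,
          y ^ (-(r / β)) * (1 - y) ^ (α - 1) * (1 + y) ^ (-(α + 1))) +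
      4 * p * α ^ 2 *
        ∑' k : ℕ, (1 / (2 * ((k : ℝ) + 1) - 1)) *
          ∫ y in (0:ℝ)..1,
            y ^ (2 * ((k : ℝ) + 1) - 1 - r / β) * (1 - y) ^ (α - 1) *
              (1 + y) ^ (-(α + 1)) := by
  have hs : -1 < -(r / β) := neg_lt_neg ((div_lt_one hβ).2 hrβ)
  have ht : -1 < α - 1 := by linarith
  have hIoo (g : ℝ → ℝ) : ∫ y in (0:ℝ)..1, g y = ∫ y in Ioo (0:ℝ) 1, g y := by
    rw [intervalIntegral.integral_of_le zero_le_one, integral_Ioc_eq_integral_Ioo]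
  have hcoef (k : ℕ) : 2 * ((k : ℝ) + 1) - 1 = 2 * k + 1 := by ring
  have hK := integrableOn_rpow_mul_one_sub_rpow_mul_one_add_rpow hs ht (-(α + 1))
  have hKL := integrableOn_rpow_mul_one_sub_rpow_mul_one_add_rpow_mul_log hs ht (-(α + 1))
  have hseries : HasSum (fun k : ℕ => 1 / (2 * (k : ℝ) + 1) *
        ∫ y in Ioo (0:ℝ) 1, y ^ (2 * k + 1 - r / β) * (1 - y) ^ (α - 1) * (1 + y) ^ (-(α + 1)))
      ((∫ y in Ioo (0:ℝ) 1, y ^ (-(r / β)) * (1 - y) ^ (α - 1) * (1 + y) ^ (-(α + 1)) *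
        (log (1 + y) - log (1 - y))) / 2) :=
    ((hasSum_setIntegral_rpow_mul_log hs ht _).div_const 2).congr_fun fun k => by
      rw [← sub_eq_add_neg]
      ring
  simp only [hIoo, hcoef]
  refine ⟨hseries.summable, ?_⟩
  rw [hseries.tsum_eq, setIntegral_rpow_neg_mul_rtuomgPDF hβ, ← integral_div,
    ← integral_const_mul, ← integral_const_mul,
    ← integral_add (hK.const_mul _) ((hKL.div_const 2).const_mul _)]
  refine setIntegral_congr_fun measurableSet_Ioo fun y _ => ?_
  ring

/-- **Inverted moments of the RTUOMG distribution (Proposition 3, integral form).**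
For `α > 0`, `β > 0`, `p ∈ [0,1]` and `0 < r < β`,
`∫₀¹ x^{-r} f(x) dx = 2α(1-p) ∫₀¹ y^{-r/β} (1-y)^{α-1} (1+y)^{-(α+1)} dy
  + 4pα² ∑_{k=1}^∞ (1/(2k-1)) ∫₀¹ y^{2k-1-r/β} (1-y)^{α-1} (1+y)^{-(α+1)} dy`,
the series on the right being convergent. -/
theorem rtuomg_inverted_moment (α β p r : ℝ) (hα : 0 < α) (hβ : 0 < β)
    (hp : p ∈ Set.Icc (0:ℝ) 1) (hr : 0 < r) (hrβ : r < β) :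
    Summable (fun k : ℕ => (1 / (2 * ((k : ℝ) + 1) - 1)) *
      ∫ y in (0:ℝ)..1,
        y ^ (2 * ((k : ℝ) + 1) - 1 - r / β) * (1 - y) ^ (α - 1) *
          (1 + y) ^ (-(α + 1))) ∧
    (∫ x in (0:ℝ)..1, x ^ (-r) * rtuomgPDF α β p x) =
      2 * α * (1 - p) *
        (∫ y in (0:ℝ)..1,
          y ^ (-(r / β)) * (1 - y) ^ (α - 1) * (1 + y) ^ (-(α + 1))) +
      4 * p * α ^ 2 *
        ∑' k : ℕ, (1 / (2 * ((k : ℝ) + 1) - 1)) *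
          ∫ y in (0:ℝ)..1,
            y ^ (2 * ((k : ℝ) + 1) - 1 - r / β) * (1 - y) ^ (α - 1) *
              (1 + y) ^ (-(α + 1)) :=
  rtuomg_inverted_moment_general α β p r hα hβ hrβ
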